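/- Let X be the Cantor set, U ⊊ X open, h : U → V a homeomorphism onto an open set, and R the étale equivalence relation on ℤ × X induced by the partial action generated by h. Then R is an AF equivalence relation: it is an increasing union of subequivalence relations R_k each of which is a proper equivalence relation (its quotient space is Hausdorff); moreover each R_k is an increasing union of compact open étale subequivalence relations R_k^n = R_k ∩ {(r,x,s,y) : |r|,|s| ≤ n}. -/

import Mathlib

variable {X : Type*}

/-- The `n`-fold iterate of `h` for `n ≥ 0`, and of the inverse `h'` for `n < 0`. -/
def hIter (h h' : X → X) : ℤ → X → X
  | (n : ℕ) => h^[n]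
  | (Int.negSucc n) => h'^[n + 1]

/-- `domPos h U n = U ∩ h⁻¹(U) ∩ ⋯ ∩ h^{-(n-1)}(U)`, the domain of the `n`-fold iterate
of the partial map `h : U → X`. -/
def domPos (h : X → X) (U : Set X) : ℕ → Set X
  | 0 => Set.univ
  | n + 1 => U ∩ h ⁻¹' domPos h U n

/-- `domI h h' U V n` is the domain of the `n`-th iterate `hIter h h' n` of the partial
homeomorphism `h : U → V` with inverse `h' : V → U`. -/
def domI (h h' : X → X) (U V : Set X) : ℤ → Set X
  | (n : ℕ) => domPos h U n
  | (Int.negSucc n) => domPos h' V (n + 1)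

/-- The equivalence relation on `ℤ × X` induced by the partial action generated by the
partial homeomorphism `h : U → V`: `(r,x) ∼ (s,y) ⟺ x ∈ X_{s-r}` and `h_{r-s}(x) = y`,
where `X_{-n} = dom(hⁿ)`. -/
def RZ (h h' : X → X) (U V : Set X) : Set ((ℤ × X) × (ℤ × X)) :=
  {q | q.1.2 ∈ domI h h' U V (q.1.1 - q.2.1) ∧
    hIter h h' (q.1.1 - q.2.1) q.1.2 = q.2.2}

/-- The subrelation `R_k` induced by restricting `h` to `U_k` (with image `h''U_k`). -/
def RZk (h h' : X → X) (Uk : Set X) : Set ((ℤ × X) × (ℤ × X)) :=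
  RZ h h' Uk (h '' Uk)

/-- The compact open pieces `R_k^n = R_k ∩ {(r,x,s,y) : |r|,|s| ≤ n}`. -/
def RZkn (h h' : X → X) (Uk : Set X) (n : ℕ) : Set ((ℤ × X) × (ℤ × X)) :=
  RZk h h' Uk ∩ {q | |q.1.1| ≤ (n : ℤ) ∧ |q.2.1| ≤ (n : ℤ)}

set_option linter.unusedVariables false
set_option linter.unusedSectionVars false

section algebra
variable {h h' : X → X} {A B : Set X}

lemma hIter_natCast (h h' : X → X) (n : ℕ) : hIter h h' (n : ℤ) = h^[n] := rfl
lemma domI_natCast (h h' : X → X) (A B : Set X) (n : ℕ) :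
    domI h h' A B (n : ℤ) = domPos h A n := rfl

lemma hIter_neg (h h' : X → X) (d : ℤ) : hIter h h' (-d) = hIter h' h d := by
  match d with
  | Int.ofNat 0 => rfl
  | Int.ofNat (n+1) => rfl
  | Int.negSucc n => rfl

lemma domI_neg (h h' : X → X) (A B : Set X) (d : ℤ) :
    domI h h' A B (-d) = domI h' h B A d := by
  match d with
  | Int.ofNat 0 => rfl
  | Int.ofNat (n+1) => rfl
  | Int.negSucc n => rfl

lemma mem_domPos_iff : ∀ {n : ℕ} {x : X},
    x ∈ domPos h A n ↔ ∀ i < n, h^[i] x ∈ A := by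
  intro n
  induction n with
  | zero => simp [domPos]
  | succ n ih =>
    intro x
    simp only [domPos, Set.mem_inter_iff, Set.mem_preimage, ih]
    constructor
    · rintro ⟨hx, hh⟩ i hi
      cases i with
      | zero => simpa using hx
      | succ i => rw [Function.iterate_succ_apply]; exact hh i (by omega)
    · intro H
      exact ⟨by simpa using H 0 (by omega), fun i hi => by
        rw [← Function.iterate_succ_apply]; exact H (i+1) (by omega)⟩

lemma domPos_antitone {m n : ℕ} (hmn : m ≤ n) : domPos h A n ⊆ domPos h A m := by
  intro x hx
  rw [mem_domPos_iff] at hx ⊢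
  exact fun i hi => hx i (by omega)

lemma domPos_mono {A A' : Set X} (hAA : A ⊆ A') (n : ℕ) :
    domPos h A n ⊆ domPos h A' n := by
  intro x hx
  rw [mem_domPos_iff] at hx ⊢
  exact fun i hi => hAA (hx i hi)

lemma domI_mono {A A' B B' : Set X} (hA : A ⊆ A') (hB : B ⊆ B') (d : ℤ) :
    domI h h' A B d ⊆ domI h h' A' B' d := by
  match d with
  | Int.ofNat n => exact domPos_mono hA n
  | Int.negSucc n => exact domPos_mono hB (n + 1)

lemma iter_back (hinv : ∀ x ∈ A, h' (h x) = x)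
    {n : ℕ} {x : X} (hx : ∀ i < n, h^[i] x ∈ A) :
    ∀ i ≤ n, h'^[i] (h^[n] x) = h^[n - i] x := by
  intro i
  induction i with
  | zero => simp
  | succ i ih =>
    intro hi
    rw [Function.iterate_succ_apply', ih (by omega)]
    have h1 : n - i = (n - (i + 1)) + 1 := by omega
    rw [h1, Function.iterate_succ_apply']
    exact hinv _ (hx _ (by omega))

lemma symm_pos (hAB : Set.MapsTo h A B) (hinv : ∀ x ∈ A, h' (h x) = x)
    {n : ℕ} {x : X} (hx : x ∈ domPos h A n) :
    h^[n] x ∈ domPos h' B n ∧ h'^[n] (h^[n] x) = x := by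
  rw [mem_domPos_iff] at hx
  refine ⟨?_, by simpa using iter_back hinv hx n le_rfl⟩
  rw [mem_domPos_iff]
  intro i hi
  rw [iter_back hinv hx i (le_of_lt hi)]
  have h1 : n - i = (n - i - 1) + 1 := by omega
  rw [h1, Function.iterate_succ_apply']
  exact hAB (hx _ (by omega))

lemma symm_iter (hAB : Set.MapsTo h A B) (hBA : Set.MapsTo h' B A)
    (hinv : ∀ x ∈ A, h' (h x) = x) (hinv' : ∀ y ∈ B, h (h' y) = y)
    {d : ℤ} {x : X} (hx : x ∈ domI h h' A B d) :
    hIter h h' d x ∈ domI h h' A B (-d) ∧ hIter h h' (-d) (hIter h h' d x) = x := by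
  rw [domI_neg, hIter_neg]
  match d with
  | Int.ofNat n =>
    have hx' : x ∈ domPos h A n := hx
    have := symm_pos hAB hinv hx'
    exact ⟨this.1, this.2⟩
  | Int.negSucc n =>
    have hx' : x ∈ domPos h' B (n + 1) := hx
    have := symm_pos hBA hinv' hx'
    exact ⟨this.1, this.2⟩

lemma comp_nonneg (hAB : Set.MapsTo h A B) (hBA : Set.MapsTo h' B A)
    (hinv : ∀ x ∈ A, h' (h x) = x) (hinv' : ∀ y ∈ B, h (h' y) = y)
    {n : ℕ} {b : ℤ} {x : X}
    (hx : x ∈ domI h h' A B (n : ℤ)) (hy : hIter h h' (n : ℤ) x ∈ domI h h' A B b) :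
    x ∈ domI h h' A B ((n : ℤ) + b) ∧
      hIter h h' b (hIter h h' (n : ℤ) x) = hIter h h' ((n : ℤ) + b) x := by
  have hx' : x ∈ domPos h A n := hx
  rw [hIter_natCast] at hy ⊢
  match b with
  | Int.ofNat m =>
    have hy' : h^[n] x ∈ domPos h A m := hy
    have e : (n : ℤ) + Int.ofNat m = ((n + m : ℕ) : ℤ) := by
      simp only [Int.ofNat_eq_coe]; push_cast; ring
    have hIm : hIter h h' (Int.ofNat m) = h^[m] := rfl
    rw [e, domI_natCast, hIm, hIter_natCast]
    rw [mem_domPos_iff] at hx' hy' ⊢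
    constructor
    · intro i hi
      rcases lt_or_ge i n with hin | hin
      · exact hx' i hin
      · have : i = (i - n) + n := by omega
        rw [this, Function.iterate_add_apply]
        exact hy' (i - n) (by omega)
    · rw [show n + m = m + n by omega, Function.iterate_add_apply]
  | Int.negSucc m' =>
    set m := m' + 1 with hm
    have hy' : h^[n] x ∈ domPos h' B m := hy
    rw [mem_domPos_iff] at hx' hy'
    have hIterb : hIter h h' (Int.negSucc m') = h'^[m] := rfl
    rcases le_or_gt m n with hmn | hmn
    · have e : (n : ℤ) + Int.negSucc m' = ((n - m : ℕ) : ℤ) := by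
        rw [Int.negSucc_eq]; omega
      rw [e, domI_natCast, hIter_natCast, hIterb]
      constructor
      · rw [mem_domPos_iff]; exact fun i hi => hx' i (by omega)
      · exact iter_back hinv hx' m hmn
    · have e : (n : ℤ) + Int.negSucc m' = -(((m - n : ℕ) : ℤ)) := by
        rw [Int.negSucc_eq]; omega
      rw [e, domI_neg, domI_natCast, hIter_neg, hIter_natCast, hIterb]
      have hback : h'^[n] (h^[n] x) = x :=
        (symm_pos hAB hinv (mem_domPos_iff.2 hx')).2
      constructor
      · rw [mem_domPos_iff]
        intro i hi
        have : h'^[i] x = h'^[i + n] (h^[n] x) := by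
          rw [Function.iterate_add_apply, hback]
        rw [this]
        exact hy' (i + n) (by omega)
      · conv_lhs => rw [show m = (m - n) + n by omega]
        rw [Function.iterate_add_apply, hback]

lemma comp_iter (hAB : Set.MapsTo h A B) (hBA : Set.MapsTo h' B A)
    (hinv : ∀ x ∈ A, h' (h x) = x) (hinv' : ∀ y ∈ B, h (h' y) = y)
    {a b : ℤ} {x : X}
    (hx : x ∈ domI h h' A B a) (hy : hIter h h' a x ∈ domI h h' A B b) :
    x ∈ domI h h' A B (a + b) ∧
      hIter h h' b (hIter h h' a x) = hIter h h' (a + b) x := by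
  match a with
  | Int.ofNat n => exact comp_nonneg hAB hBA hinv hinv' hx hy
  | Int.negSucc n =>
    have hx' : x ∈ domI h' h B A ((n + 1 : ℕ) : ℤ) := hx
    have hyy : hIter h' h ((n + 1 : ℕ) : ℤ) x ∈ domI h' h B A (-b) := by
      rw [domI_neg]; exact hy
    have := comp_nonneg hBA hAB hinv' hinv hx' hyy
    have e : ((n + 1 : ℕ) : ℤ) + -b = -(Int.negSucc n + b) := by
      rw [Int.negSucc_eq]; push_cast; ring
    rw [e, domI_neg, hIter_neg, hIter_neg] at this
    exact ⟨this.1, this.2⟩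
end algebra

section topo
variable [TopologicalSpace X] [CompactSpace X] [T2Space X]
variable {h h' : X → X} {A B U V : Set X}

lemma domPos_isClopen (hA : IsClopen A) (hAU : A ⊆ U) (hUo : IsOpen U)
    (hc : ContinuousOn h U) : ∀ n, IsClopen (domPos h A n)
  | 0 => isClopen_univ
  | n + 1 => by
    have ih := domPos_isClopen hA hAU hUo hc n
    constructor
    · show IsClosed (A ∩ h ⁻¹' domPos h A n)
      exact (hc.mono hAU).preimage_isClosed_of_isClosed hA.isClosed ih.isClosed
    · show IsOpen (A ∩ h ⁻¹' domPos h A n)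
      have : A ∩ h ⁻¹' domPos h A n = A ∩ (U ∩ h ⁻¹' domPos h A n) := by
        ext x; simp only [Set.mem_inter_iff]; tauto
      rw [this]
      exact hA.isOpen.inter (hc.isOpen_inter_preimage hUo ih.isOpen)

lemma contOn_iterate (hcA : ContinuousOn h A) :
    ∀ n, ContinuousOn h^[n] (domPos h A n)
  | 0 => by simpa using continuousOn_id
  | n + 1 => by
    have ih := contOn_iterate hcA n
    rw [Function.iterate_succ]
    refine ContinuousOn.comp ih (hcA.mono Set.inter_subset_left) ?_
    intro x hx
    exact hx.2

lemma domI_isClopen (hA : IsClopen A) (hB : IsClopen B) (hAU : A ⊆ U) (hBV : B ⊆ V)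
    (hUo : IsOpen U) (hVo : IsOpen V) (hc : ContinuousOn h U) (hc' : ContinuousOn h' V)
    (d : ℤ) : IsClopen (domI h h' A B d) := by
  match d with
  | Int.ofNat n => exact domPos_isClopen hA hAU hUo hc n
  | Int.negSucc n => exact domPos_isClopen hB hBV hVo hc' (n + 1)

lemma contOn_hIter (hAU : A ⊆ U) (hBV : B ⊆ V)
    (hc : ContinuousOn h U) (hc' : ContinuousOn h' V) (d : ℤ) :
    ContinuousOn (hIter h h' d) (domI h h' A B d) := by
  match d with
  | Int.ofNat n => exact contOn_iterate (hc.mono hAU) n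
  | Int.negSucc n => exact contOn_iterate (hc'.mono hBV) (n + 1)

lemma isClosed_int_sections {Y : Type*} [TopologicalSpace Y] (C : ℤ → Set Y)
    (hC : ∀ d, IsClosed (C d)) : IsClosed {p : ℤ × Y | p.2 ∈ C p.1} := by
  rw [← isOpen_compl_iff]
  have : {p : ℤ × Y | p.2 ∈ C p.1}ᶜ = ⋃ d, ({d} : Set ℤ) ×ˢ (C d)ᶜ := by
    ext p
    simp only [Set.mem_compl_iff, Set.mem_setOf_eq, Set.mem_iUnion, Set.mem_prod,
      Set.mem_singleton_iff]
    constructor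
    · intro hp; exact ⟨p.1, rfl, hp⟩
    · rintro ⟨d, rfl, hp⟩; exact hp
  rw [this]
  exact isOpen_iUnion fun d => (isOpen_discrete _).prod (hC d).isOpen_compl

lemma isClosed_graphI (hA : IsClopen A) (hB : IsClopen B) (hAU : A ⊆ U) (hBV : B ⊆ V)
    (hUo : IsOpen U) (hVo : IsOpen V) (hc : ContinuousOn h U) (hc' : ContinuousOn h' V)
    (d : ℤ) :
    IsClosed {xy : X × X | xy.1 ∈ domI h h' A B d ∧ hIter h h' d xy.1 = xy.2} := by
  have hdom := domI_isClopen hA hB hAU hBV hUo hVo hc hc' d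
  have hcontI := contOn_hIter (h := h) (h' := h') hAU hBV hc hc' d
  have heq : {xy : X × X | xy.1 ∈ domI h h' A B d ∧ hIter h h' d xy.1 = xy.2}
      = (fun x => (x, hIter h h' d x)) '' domI h h' A B d := by
    ext xy
    simp only [Set.mem_setOf_eq, Set.mem_image]
    constructor
    · rintro ⟨hx, hit⟩; exact ⟨xy.1, hx, Prod.ext rfl hit⟩
    · rintro ⟨x', hx', rfl⟩; exact ⟨hx', rfl⟩
  rw [heq]
  have hcomp : IsCompact (domI h h' A B d) := hdom.isClosed.isCompact
  exact (hcomp.image_of_continuousOn (continuousOn_id.prodMk hcontI)).isClosed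

lemma isClosed_RZ (hA : IsClopen A) (hB : IsClopen B) (hAU : A ⊆ U) (hBV : B ⊆ V)
    (hUo : IsOpen U) (hVo : IsOpen V) (hc : ContinuousOn h U) (hc' : ContinuousOn h' V) :
    IsClosed (RZ h h' A B) := by
  have key := isClosed_int_sections
    (fun d => {xy : X × X | xy.1 ∈ domI h h' A B d ∧ hIter h h' d xy.1 = xy.2})
    (fun d => isClosed_graphI hA hB hAU hBV hUo hVo hc hc' d)
  have hF : Continuous (fun q : (ℤ × X) × (ℤ × X) => (q.1.1 - q.2.1, (q.1.2, q.2.2))) := by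
    fun_prop
  exact key.preimage hF

lemma sat_open (hA : IsClopen A) (hB : IsClopen B) (hAU : A ⊆ U) (hBV : B ⊆ V)
    (hUo : IsOpen U) (hVo : IsOpen V) (hc : ContinuousOn h U) (hc' : ContinuousOn h' V)
    (hAB : Set.MapsTo h A B) (hBA : Set.MapsTo h' B A)
    (hinv : ∀ x ∈ A, h' (h x) = x) (hinv' : ∀ y ∈ B, h (h' y) = y)
    (W : Set (ℤ × X)) (hW : IsOpen W) :
    IsOpen {z : ℤ × X | ∃ w ∈ W, (w, z) ∈ RZ h h' A B} := by
  have heq : {z : ℤ × X | ∃ w ∈ W, (w, z) ∈ RZ h h' A B}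
      = ⋃ d : ℤ, ((Set.univ ×ˢ domI h h' A B (-d)) ∩
          (fun p : ℤ × X => (p.1 + d, hIter h h' (-d) p.2)) ⁻¹' W) := by
    ext z
    simp only [Set.mem_setOf_eq, Set.mem_iUnion, Set.mem_inter_iff, Set.mem_prod,
      Set.mem_preimage, Set.mem_univ, true_and]
    constructor
    · rintro ⟨w, hwW, hmem, hit⟩
      refine ⟨w.1 - z.1, ?_, ?_⟩
      · rw [← hit]; exact (symm_iter hAB hBA hinv hinv' hmem).1
      · have := (symm_iter hAB hBA hinv hinv' hmem).2
        rw [hit] at this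
        have hz1 : z.1 + (w.1 - z.1) = w.1 := by ring
        rw [hz1, this]
        exact hwW
    · rintro ⟨d, hmem, hwW⟩
      refine ⟨(z.1 + d, hIter h h' (-d) z.2), hwW, ?_, ?_⟩
      · have : z.1 + d - z.1 = d := by ring
        rw [this]
        have := (symm_iter hAB hBA hinv hinv' hmem).1
        rwa [neg_neg] at this
      · have : z.1 + d - z.1 = d := by ring
        rw [this]
        have := (symm_iter hAB hBA hinv hinv' hmem).2
        rwa [neg_neg] at this
  rw [heq]
  refine isOpen_iUnion fun d => ?_
  have hdom := domI_isClopen hA hB hAU hBV hUo hVo hc hc' (-d)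
  have hcontI := contOn_hIter (h := h) (h' := h') hAU hBV hc hc' (-d)
  have hgc : ContinuousOn (fun p : ℤ × X => (p.1 + d, hIter h h' (-d) p.2))
      (Set.univ ×ˢ domI h h' A B (-d)) := by
    refine ContinuousOn.prodMk ?_ ?_
    · exact (continuous_fst.add continuous_const).continuousOn
    · exact hcontI.comp continuousOn_snd (fun p hp => hp.2)
  exact hgc.isOpen_inter_preimage (isOpen_univ.prod hdom.isOpen) hW
end topo


/-- Let `X` be the Cantor set, `U ⊊ X` open, `h : U → V` a homeomorphism and `R` the
induced étale equivalence relation on `ℤ × X`.  Then `R` is an AF equivalence relation: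
`R` is the increasing union of subequivalence relations `R_k`, each of which is a proper
equivalence relation (its quotient is Hausdorff); moreover each `R_k` is the increasing
union of the compact (and open in `R_k`) subrelations `R_k^n = R_k ∩ {|r|,|s| ≤ n}`. -/
theorem RZ_is_AF [TopologicalSpace X] [CompactSpace X] [T2Space X]
    [TotallyDisconnectedSpace X] [TopologicalSpace.MetrizableSpace X] [PerfectSpace X]
    [Nonempty X]
    (U V : Set X) (hU : IsOpen U) (hV : IsOpen V) (hUproper : U ≠ Set.univ)
    (h h' : X → X) (hbij : Set.BijOn h U V) (hcont : ContinuousOn h U)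
    (hbij' : Set.BijOn h' V U) (hcont' : ContinuousOn h' V)
    (hinv : ∀ x ∈ U, h' (h x) = x) (hinv' : ∀ y ∈ V, h (h' y) = y)
    (Uk : ℕ → Set X) (hUk : ∀ k, IsClopen (Uk k)) (hmono : Monotone Uk)
    (hunion : (⋃ k, Uk k) = U) :
    -- `R` is the increasing union of the `R_k`
    (∀ k, RZk h h' (Uk k) ⊆ RZk h h' (Uk (k + 1))) ∧
    (RZ h h' U V = ⋃ k, RZk h h' (Uk k)) ∧
    -- each `R_k` is an equivalence relation whose quotient space is Hausdorff (proper)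
    (∀ k, Equivalence (fun p q : ℤ × X => (p, q) ∈ RZk h h' (Uk k))) ∧
    (∀ k, T2Space (Quot (fun p q : ℤ × X => (p, q) ∈ RZk h h' (Uk k)))) ∧
    -- each `R_k` is the increasing union of the compact, open-in-`R_k`, pieces `R_k^n`
    (∀ k, Monotone (fun n => RZkn h h' (Uk k) n)) ∧
    (∀ k, (⋃ n, RZkn h h' (Uk k) n) = RZk h h' (Uk k)) ∧
    (∀ k n, IsCompact (RZkn h h' (Uk k) n) ∧
      IsOpen (Subtype.val ⁻¹' RZkn h h' (Uk k) n : Set ↥(RZk h h' (Uk k)))) := by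
  -- basic facts
  have hUkU : ∀ k, Uk k ⊆ U := fun k => by
    rw [← hunion]; exact Set.subset_iUnion Uk k
  have himgV : ∀ k, h '' Uk k ⊆ V := fun k => by
    rw [← hbij.image_eq]; exact Set.image_mono (f := h) (hUkU k)
  have hmapsAB : ∀ k, Set.MapsTo h (Uk k) (h '' Uk k) := fun k x hx =>
    Set.mem_image_of_mem h hx
  have hmapsBA : ∀ k, Set.MapsTo h' (h '' Uk k) (Uk k) := by
    rintro k y ⟨x, hx, rfl⟩
    rw [hinv x (hUkU k hx)]; exact hx
  have hinvA : ∀ k, ∀ x ∈ Uk k, h' (h x) = x := fun k x hx => hinv x (hUkU k hx)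
  have hinvB : ∀ k, ∀ y ∈ h '' Uk k, h (h' y) = y := fun k y hy => hinv' y (himgV k hy)
  have hBclopen : ∀ k, IsClopen (h '' Uk k) := by
    intro k
    constructor
    · exact (((hUk k).isClosed.isCompact).image_of_continuousOn
        (hcont.mono (hUkU k))).isClosed
    · have : h '' Uk k = V ∩ h' ⁻¹' Uk k := by
        ext y
        constructor
        · rintro ⟨x, hx, rfl⟩
          refine ⟨hbij.mapsTo (hUkU k hx), ?_⟩
          show h' (h x) ∈ Uk k
          rw [hinv x (hUkU k hx)]; exact hx
        · rintro ⟨hyV, hy⟩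
          exact ⟨h' y, hy, hinv' y hyV⟩
      rw [this]
      exact hcont'.isOpen_inter_preimage hV (hUk k).isOpen
  -- finitely many points of U lie in a common Uk
  have hfind : ∀ (n : ℕ) (f : ℕ → X), (∀ i < n, f i ∈ U) → ∃ k, ∀ i < n, f i ∈ Uk k := by
    intro n
    induction n with
    | zero => exact fun f _ => ⟨0, fun i hi => absurd hi (by omega)⟩
    | succ n ih =>
      intro f hf
      obtain ⟨k1, hk1⟩ := ih f (fun i hi => hf i (by omega))
      have hfn : f n ∈ ⋃ k, Uk k := by rw [hunion]; exact hf n (by omega)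
      obtain ⟨k2, hk2⟩ := Set.mem_iUnion.1 hfn
      refine ⟨max k1 k2, fun i hi => ?_⟩
      rcases Nat.lt_succ_iff_lt_or_eq.1 hi with hlt | heq
      · exact hmono (le_max_left _ _) (hk1 i hlt)
      · exact heq ▸ hmono (le_max_right _ _) hk2
  -- the equivalence relations
  have hequiv : ∀ k, Equivalence (fun p q : ℤ × X => (p, q) ∈ RZk h h' (Uk k)) := by
    intro k
    constructor
    · intro p
      refine ⟨?_, ?_⟩ <;> rw [sub_self]
      · show p.2 ∈ domPos h (Uk k) 0
        trivial
      · rfl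
    · intro p q hpq
      obtain ⟨hm, he⟩ := hpq
      have hs := symm_iter (hmapsAB k) (hmapsBA k) (hinvA k) (hinvB k) hm
      rw [he] at hs
      have e : q.1 - p.1 = -(p.1 - q.1) := by ring
      exact ⟨by rw [e]; exact hs.1, by rw [e]; exact hs.2⟩
    · intro p q t hpq hqt
      obtain ⟨hm1, he1⟩ := hpq
      obtain ⟨hm2, he2⟩ := hqt
      have hy : hIter h h' (p.1 - q.1) p.2 ∈ domI h h' (Uk k) (h '' Uk k) (q.1 - t.1) := by
        rw [he1]; exact hm2
      have hc := comp_iter (hmapsAB k) (hmapsBA k) (hinvA k) (hinvB k) hm1 hy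
      have e : p.1 - t.1 = (p.1 - q.1) + (q.1 - t.1) := by ring
      refine ⟨by rw [e]; exact hc.1, ?_⟩
      rw [e, ← hc.2, he1, he2]
  have hclosedk : ∀ k, IsClosed (RZk h h' (Uk k)) := fun k =>
    isClosed_RZ (hUk k) (hBclopen k) (hUkU k) (himgV k) hU hV hcont hcont'
  refine ⟨?_, ?_, hequiv, ?_, ?_, ?_, ?_⟩
  · -- monotone in k
    intro k q hq
    refine ⟨domI_mono (hmono (Nat.le_succ k)) (Set.image_mono (f := h) (hmono (Nat.le_succ k))) _ hq.1,
      hq.2⟩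
  · -- union
    ext q
    constructor
    · rintro ⟨hm, he⟩
      rw [Set.mem_iUnion]
      set d := q.1.1 - q.2.1 with hd
      match hdd : d, hm, he with
      | Int.ofNat n, hm, he =>
        have hm' : q.1.2 ∈ domPos h U n := hm
        rw [mem_domPos_iff] at hm'
        obtain ⟨k, hk⟩ := hfind n (fun i => h^[i] q.1.2) hm'
        refine ⟨k, ?_, ?_⟩ <;> rw [← hd]
        · show q.1.2 ∈ domPos h (Uk k) n
          exact mem_domPos_iff.2 hk
        · exact he
      | Int.negSucc n, hm, he =>
        have hm' : q.1.2 ∈ domPos h' V (n + 1) := hm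
        rw [mem_domPos_iff] at hm'
        have hptU : ∀ i < n + 1, h'^[i + 1] q.1.2 ∈ U := fun i hi => by
          rw [Function.iterate_succ_apply']
          exact hbij'.mapsTo (hm' i hi)
        obtain ⟨k, hk⟩ := hfind (n + 1) (fun i => h'^[i + 1] q.1.2) hptU
        refine ⟨k, ?_, ?_⟩ <;> rw [← hd]
        · show q.1.2 ∈ domPos h' (h '' Uk k) (n + 1)
          rw [mem_domPos_iff]
          intro i hi
          have : h'^[i] q.1.2 = h (h'^[i + 1] q.1.2) := by
            rw [Function.iterate_succ_apply', hinv' _ (hm' i hi)]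
          rw [this]
          exact Set.mem_image_of_mem h (hk i hi)
        · exact he
    · rw [Set.mem_iUnion]
      rintro ⟨k, hm, he⟩
      exact ⟨domI_mono (hUkU k) (himgV k) _ hm, he⟩
  · -- T2 quotients
    intro k
    refine ⟨fun a b hab => ?_⟩
    obtain ⟨p, rfl⟩ := Quot.exists_rep a
    obtain ⟨q, rfl⟩ := Quot.exists_rep b
    have hnr : (p, q) ∉ RZk h h' (Uk k) := fun hr => hab (Quot.sound hr)
    have hopen : IsOpen ((RZk h h' (Uk k))ᶜ) := (hclosedk k).isOpen_compl
    obtain ⟨W1, W2, hW1, hW2, hpW1, hqW2, hsub⟩ :=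
      isOpen_prod_iff.1 hopen p q hnr
    set r := fun p q : ℤ × X => (p, q) ∈ RZk h h' (Uk k) with hr
    have hpre : ∀ W : Set (ℤ × X),
        Quot.mk r ⁻¹' (Quot.mk r '' W) = {z | ∃ w ∈ W, (w, z) ∈ RZk h h' (Uk k)} := by
      intro W
      ext z
      simp only [Set.mem_preimage, Set.mem_image, Set.mem_setOf_eq]
      constructor
      · rintro ⟨w, hw, he⟩
        exact ⟨w, hw, (hequiv k).eqvGen_iff.1 (Quot.eq.1 he)⟩
      · rintro ⟨w, hw, he⟩
        exact ⟨w, hw, Quot.sound he⟩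
    have hsat : ∀ W : Set (ℤ × X), IsOpen W → IsOpen (Quot.mk r '' W) := by
      intro W hW
      rw [← isQuotientMap_quot_mk.isOpen_preimage, hpre]
      exact sat_open (hUk k) (hBclopen k) (hUkU k) (himgV k) hU hV hcont hcont'
        (hmapsAB k) (hmapsBA k) (hinvA k) (hinvB k) W hW
    refine ⟨Quot.mk r '' W1, Quot.mk r '' W2, hsat W1 hW1, hsat W2 hW2,
      ⟨p, hpW1, rfl⟩, ⟨q, hqW2, rfl⟩, ?_⟩
    rw [Set.disjoint_left]
    rintro c ⟨w1, hw1, rfl⟩ ⟨w2, hw2, hc⟩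
    have : r w2 w1 := (hequiv k).eqvGen_iff.1 (Quot.eq.1 hc)
    have hw12 : (w1, w2) ∈ RZk h h' (Uk k) := (hequiv k).symm this
    exact hsub (Set.mk_mem_prod hw1 hw2) hw12
  · -- RZkn monotone in n
    intro k n m hnm q hq
    exact ⟨hq.1, hq.2.1.trans (by exact_mod_cast hnm), hq.2.2.trans (by exact_mod_cast hnm)⟩
  · -- union over n
    intro k
    ext q
    simp only [Set.mem_iUnion]
    constructor
    · rintro ⟨n, hn⟩; exact hn.1
    · intro hq
      refine ⟨q.1.1.natAbs + q.2.1.natAbs, hq, ?_, ?_⟩ <;>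
        · rw [Int.abs_eq_natAbs, Nat.cast_add]; omega
  · -- compact and open
    intro k n
    constructor
    · have hC : IsCompact (((Set.Icc (-(n : ℤ)) n) ×ˢ (Set.univ : Set X)) ×ˢ
          ((Set.Icc (-(n : ℤ)) n) ×ˢ (Set.univ : Set X))) :=
        (((Set.finite_Icc _ _).isCompact.prod isCompact_univ).prod
          ((Set.finite_Icc _ _).isCompact.prod isCompact_univ))
      refine IsCompact.of_isClosed_subset hC ?_ ?_
      · refine (hclosedk k).inter ?_
        have : IsClosed {p : ℤ × ℤ | |p.1| ≤ (n : ℤ) ∧ |p.2| ≤ (n : ℤ)} :=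
          isClosed_discrete _
        exact this.preimage (by fun_prop :
          Continuous (fun q : (ℤ × X) × (ℤ × X) => (q.1.1, q.2.1)))
      · rintro q ⟨_, h1, h2⟩
        refine ⟨⟨?_, trivial⟩, ⟨?_, trivial⟩⟩
        · exact Set.mem_Icc.2 (abs_le.1 h1)
        · exact Set.mem_Icc.2 (abs_le.1 h2)
    · have heq : (Subtype.val ⁻¹' RZkn h h' (Uk k) n : Set ↥(RZk h h' (Uk k)))
          = Subtype.val ⁻¹' {q : (ℤ × X) × (ℤ × X) | |q.1.1| ≤ (n : ℤ) ∧ |q.2.1| ≤ (n : ℤ)} := by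
        ext z
        simp only [Set.mem_preimage, RZkn, Set.mem_inter_iff, Set.mem_setOf_eq]
        exact ⟨fun hz => hz.2, fun hz => ⟨z.2, hz⟩⟩
      rw [heq]
      refine IsOpen.preimage continuous_subtype_val ?_
      have : IsOpen {p : ℤ × ℤ | |p.1| ≤ (n : ℤ) ∧ |p.2| ≤ (n : ℤ)} := isOpen_discrete _
      exact this.preimage (by fun_prop :
        Continuous (fun q : (ℤ × X) × (ℤ × X) => (q.1.1, q.2.1)))
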